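/- arXiv:2401.03616 — 4 statements merged into one kernel-verified Lean document; each statement's English description precedes it below -/
import Mathlib

section
/- Let G=(V,E) be a finite graph and x : E → ℝ satisfy: (i) x_e ≥ 0 for all e, (ii) for every vertex i, ∑_{j ∈ N(i)} x_{ij} ≤ 1, and (iii) for every 3-element subset S of V, ∑_{e ∈ E(S)} x_e ≤ 1. Then the scaled vector (4/5)·x satisfies all odd-set matching constraints: for every S ⊆ V with |S| odd, ∑_{e ∈ E(S)} (4/5)·x_e ≤ (|S|-1)/2. -/
/-- If `x` is nonnegative, satisfies the degree constraints, and the odd-set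
constraints for 3-element sets, then `(4/5)·x` satisfies all odd-set matching
constraints. -/
theorem stmt_1 {V : Type*} [Fintype V] [DecidableEq V]
    (G : SimpleGraph V) [DecidableRel G.Adj]
    (x : Sym2 V → ℝ)
    (hnonneg : ∀ e ∈ G.edgeFinset, 0 ≤ x e)
    (hdeg : ∀ i : V, ∑ j ∈ G.neighborFinset i, x s(i, j) ≤ 1)
    (htri : ∀ S : Finset V, S.card = 3 →
      ∑ e ∈ G.edgeFinset.filter (· ∈ S.sym2), x e ≤ 1) :
    ∀ S : Finset V, Odd S.card →
      ∑ e ∈ G.edgeFinset.filter (· ∈ S.sym2), (4 / 5) * x e ≤ ((S.card : ℝ) - 1) / 2 := by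
  intro S hS
  classical
  set ES := G.edgeFinset.filter (· ∈ S.sym2) with hES
  set P := (S ×ˢ S).filter (fun p : V × V => G.Adj p.1 p.2) with hP
  have hmemES : ∀ a b : V, s(a, b) ∈ ES ↔ G.Adj a b ∧ a ∈ S ∧ b ∈ S := by
    intro a b
    simp [ES, SimpleGraph.mem_edgeFinset, Finset.mk_mem_sym2_iff, and_assoc]
  have himg : P.image (fun p : V × V => s(p.1, p.2)) = ES := by
    ext e
    induction e using Sym2.ind with
    | _ a b =>
      rw [hmemES, Finset.mem_image]
      constructor
      · rintro ⟨p, hp, hpe⟩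
        simp only [hP, Finset.mem_filter, Finset.mem_product] at hp
        rw [Sym2.eq_iff] at hpe
        rcases hpe with ⟨h1, h2⟩ | ⟨h1, h2⟩
        · exact ⟨h1 ▸ h2 ▸ hp.2, h1 ▸ hp.1.1, h2 ▸ hp.1.2⟩
        · exact ⟨(h2 ▸ h1 ▸ hp.2).symm, h2 ▸ hp.1.2, h1 ▸ hp.1.1⟩
      · rintro ⟨hadj, ha, hb⟩
        refine ⟨(a, b), ?_, rfl⟩
        simp [hP, ha, hb, hadj]
  have hfib : ∀ e ∈ ES, (P.filter (fun p : V × V => s(p.1, p.2) = e)).card = 2 := by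
    intro e he
    induction e using Sym2.ind with
    | _ a b =>
      rw [hmemES] at he
      obtain ⟨hadj, ha, hb⟩ := he
      have heq : P.filter (fun p : V × V => s(p.1, p.2) = s(a, b)) = {(a, b), (b, a)} := by
        ext ⟨p1, p2⟩
        simp only [hP, Finset.mem_filter, Finset.mem_product, Finset.mem_insert,
          Finset.mem_singleton, Prod.mk.injEq, Sym2.eq_iff]
        constructor
        · rintro ⟨-, h⟩; exact h
        · rintro (⟨rfl, rfl⟩ | ⟨rfl, rfl⟩)
          · exact ⟨⟨⟨ha, hb⟩, hadj⟩, Or.inl ⟨rfl, rfl⟩⟩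
          · exact ⟨⟨⟨hb, ha⟩, hadj.symm⟩, Or.inr ⟨rfl, rfl⟩⟩
      rw [heq]
      rw [Finset.card_insert_of_notMem, Finset.card_singleton]
      simp only [Finset.mem_singleton, Prod.mk.injEq, not_and]
      intro h; exact absurd h hadj.ne
  have key : ∑ p ∈ P, x s(p.1, p.2) = 2 * ∑ e ∈ ES, x e := by
    rw [Finset.sum_comp (fun e => x e) (fun p : V × V => s(p.1, p.2)), himg]
    rw [Finset.mul_sum]
    refine Finset.sum_congr rfl fun e he => ?_
    rw [hfib e he]
    simp
  have hbound : ∑ e ∈ ES, x e ≤ (S.card : ℝ) / 2 := by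
    rw [le_div_iff₀ (by norm_num : (0:ℝ) < 2)]
    rw [mul_comm, ← key]
    calc ∑ p ∈ P, x s(p.1, p.2)
        = ∑ i ∈ S, ∑ j ∈ S.filter (G.Adj i), x s(i, j) := by
          rw [hP, Finset.sum_filter, Finset.sum_product]
          simp [Finset.sum_filter]
      _ ≤ ∑ i ∈ S, ∑ j ∈ G.neighborFinset i, x s(i, j) := by
          refine Finset.sum_le_sum fun i _ => ?_
          refine Finset.sum_le_sum_of_subset_of_nonneg ?_ ?_
          · intro j hj
            rw [Finset.mem_filter] at hj
            rw [SimpleGraph.mem_neighborFinset]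
            exact hj.2
          · intro j hj _
            apply hnonneg
            rw [SimpleGraph.mem_edgeFinset, SimpleGraph.mem_edgeSet]
            exact (SimpleGraph.mem_neighborFinset G i j).mp hj
      _ ≤ ∑ _i ∈ S, (1 : ℝ) := Finset.sum_le_sum fun i _ => hdeg i
      _ = (S.card : ℝ) := by simp
  have hnn : (0:ℝ) ≤ ∑ e ∈ ES, x e :=
    Finset.sum_nonneg fun e he => hnonneg e (Finset.mem_filter.mp he).1
  rw [← Finset.mul_sum]
  obtain ⟨k, hk⟩ := hS
  match k, hk with
  | 0, hk =>
    have hempty : ES = ∅ := by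
      rw [Finset.eq_empty_iff_forall_notMem]
      intro e he
      induction e using Sym2.ind with
      | _ a b =>
        rw [hmemES] at he
        obtain ⟨hadj, ha, hb⟩ := he
        have : a = b := by
          have h1 := Finset.card_eq_one.mp (by omega : S.card = 1)
          obtain ⟨v, hv⟩ := h1
          rw [hv, Finset.mem_singleton] at ha hb
          rw [ha, hb]
        exact hadj.ne this
    rw [hempty]
    simp
    rw [hk]; norm_num
  | 1, hk =>
    have h1 : ∑ e ∈ ES, x e ≤ 1 := htri S (by omega)
    rw [hk]
    push_cast
    nlinarith
  | (m + 2), hk =>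
    have h5 : (5 : ℝ) ≤ (S.card : ℝ) := by
      rw [hk]; push_cast; linarith [Nat.cast_nonneg (α := ℝ) m]
    nlinarith [hbound]
end

section
/- Let x, y, z be nonnegative reals with x² + y² + z² ≤ 2(xy + yz + zx) and x + y + z ≤ 3/2. If x + y ≥ 1, then 3(x + y − 1)² + (x − y)² ≤ 3/4. -/
/-- Entanglement convexgamy on 2 edges: if `x, y, z ≥ 0` satisfy the triangle
monogamy inequalities `x² + y² + z² ≤ 2(xy + yz + zx)` and `x + y + z ≤ 3/2`,
and `x + y ≥ 1`, then `(x,y)` lies inside the ellipse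
`3(x+y−1)² + (x−y)² ≤ 3/4`. -/
theorem stmt_3 (x y z : ℝ) (hx : 0 ≤ x) (hy : 0 ≤ y) (hz : 0 ≤ z)
    (hquad : x ^ 2 + y ^ 2 + z ^ 2 ≤ 2 * (x * y + y * z + z * x))
    (hsum : x + y + z ≤ 3 / 2)
    (hxy : 1 ≤ x + y) :
    3 * (x + y - 1) ^ 2 + (x - y) ^ 2 ≤ 3 / 4 := by
  nlinarith [mul_nonneg (sub_nonneg.2 hsum) hz, mul_nonneg (sub_nonneg.2 hsum) (sub_nonneg.2 hxy), sq_nonneg (x + y + z - 3/2), mul_nonneg hz (sub_nonneg.2 hxy)]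
end

section
/- Let G = (V,E,w) be a finite weighted graph with w_e ≥ 0, and let M : E → {0,1} be the indicator of a maximum weight matching of G. Let h⁺ : E → ℝ satisfy h⁺_e ≥ 0, ∑_{j ∈ N(i)} h⁺_{ij} ≤ 1/2 for every vertex i, and h⁺_{ij} + h⁺_{jk} + h⁺_{ik} ≤ 1/2 for every triangle {i,j,k}. Assume the matching LP theorem: the maximum weight of a matching equals the maximum of ∑ w_e x_e over x satisfying nonnegativity, degree constraints, and odd-set constraints. Then ∑_e w_e M_e ≥ (8/5) ∑_e w_e h⁺_e. -/
open Finset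

lemma dc {V : Type*} [Fintype V] [DecidableEq V] (G : SimpleGraph V) [DecidableRel G.Adj]
    (f : Sym2 V → ℝ) (S : Finset V) :
    ∑ i ∈ S, ∑ j ∈ (G.neighborFinset i).filter (· ∈ S), f s(i, j)
      = 2 * ∑ e ∈ G.edgeFinset.filter (· ∈ S.sym2), f e := by
  classical
  rw [Finset.sum_sigma']
  rw [Finset.sum_comp f (fun p : Σ _ : V, V => s(p.1, p.2))]
  have himg : Finset.image (fun p : Σ _ : V, V => s(p.1, p.2))
      (S.sigma fun i => (G.neighborFinset i).filter (· ∈ S))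
      = G.edgeFinset.filter (· ∈ S.sym2) := by
    ext e
    induction e with
    | _ a b =>
      simp only [Finset.mem_image, Finset.mem_sigma, Finset.mem_filter,
        SimpleGraph.mem_neighborFinset, SimpleGraph.mem_edgeFinset,
        SimpleGraph.mem_edgeSet, Finset.mk_mem_sym2_iff]
      constructor
      · rintro ⟨⟨i, j⟩, ⟨hi, hj, hjS⟩, heq⟩
        simp only at heq
        rcases Sym2.eq_iff.mp heq with ⟨rfl, rfl⟩ | ⟨rfl, rfl⟩
        · exact ⟨hj, hi, hjS⟩
        · exact ⟨hj.symm, hjS, hi⟩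
      · rintro ⟨hadj, ha, hb⟩
        exact ⟨⟨a, b⟩, ⟨ha, hadj, hb⟩, rfl⟩
  rw [himg]
  rw [Finset.mul_sum]
  refine Finset.sum_congr rfl ?_
  intro e he
  induction e with
  | _ a b =>
    simp only [Finset.mem_filter, SimpleGraph.mem_edgeFinset, SimpleGraph.mem_edgeSet,
      Finset.mk_mem_sym2_iff] at he
    obtain ⟨hadj, ha, hb⟩ := he
    have hne : a ≠ b := hadj.ne
    have hfib : (Finset.filter (fun p : Σ _ : V, V => s(p.1, p.2) = s(a, b))
        (S.sigma fun i => (G.neighborFinset i).filter (· ∈ S)))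
        = {⟨a, b⟩, ⟨b, a⟩} := by
      ext ⟨i, j⟩
      simp only [Finset.mem_filter, Finset.mem_sigma, SimpleGraph.mem_neighborFinset,
        Finset.mem_insert, Finset.mem_singleton]
      constructor
      · rintro ⟨⟨hi, hj, hjS⟩, heq⟩
        rcases Sym2.eq_iff.mp heq with ⟨rfl, rfl⟩ | ⟨rfl, rfl⟩
        · left; rfl
        · right; rfl
      · rintro (h | h) <;> (cases h)
        · exact ⟨⟨ha, hadj, hb⟩, rfl⟩
        · exact ⟨⟨hb, hadj.symm, ha⟩, Sym2.eq_swap⟩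
    rw [hfib]
    have : ({⟨a, b⟩, ⟨b, a⟩} : Finset (Σ _ : V, V)).card = 2 := by
      rw [Finset.card_insert_of_notMem, Finset.card_singleton]
      simp [Sigma.ext_iff, hne]
    rw [this]
    simp [two_smul]; ring

/-- Sum of `hp` over any set of edges incident to `c` is at most the star sum at `c`. -/
lemma star_bd {V : Type*} [Fintype V] [DecidableEq V] (G : SimpleGraph V) [DecidableRel G.Adj]
    (hp : Sym2 V → ℝ) (hpnonneg : ∀ e ∈ G.edgeFinset, 0 ≤ hp e)
    (c : V) (T : Finset (Sym2 V))
    (hT : T ⊆ (G.neighborFinset c).image (fun j => s(c, j))) :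
    ∑ e ∈ T, hp e ≤ ∑ j ∈ G.neighborFinset c, hp s(c, j) := by
  classical
  have hinj : ∀ j ∈ G.neighborFinset c, ∀ j' ∈ G.neighborFinset c,
      s(c, j) = s(c, j') → j = j' := by
    intro j _ j' _ h
    exact (Sym2.congr_right).mp h
  calc ∑ e ∈ T, hp e ≤ ∑ e ∈ (G.neighborFinset c).image (fun j => s(c, j)), hp e := by
        refine Finset.sum_le_sum_of_subset_of_nonneg hT ?_
        intro e he _
        simp only [Finset.mem_image, SimpleGraph.mem_neighborFinset] at he
        obtain ⟨j, hj, rfl⟩ := he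
        exact hpnonneg _ (by simpa [SimpleGraph.mem_edgeFinset] using hj)
    _ = ∑ j ∈ G.neighborFinset c, hp s(c, j) := Finset.sum_image hinj

/-- If `M` is the 0/1 indicator of a maximum weight matching (optimality over the
Edmonds matching LP is assumed as hypothesis `hLP`), and `hp = h⁺` satisfies the
star and triangle monogamy constraints, then the matching weight is at least
`(8/5) ∑ w_e h⁺_e`. -/
theorem stmt_7 {V : Type*} [Fintype V] [DecidableEq V]
    (G : SimpleGraph V) [DecidableRel G.Adj]
    (w : Sym2 V → ℝ) (hw : ∀ e ∈ G.edgeFinset, 0 ≤ w e)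
    (M : Sym2 V → ℝ)
    (hM01 : ∀ e ∈ G.edgeFinset, M e = 0 ∨ M e = 1)
    (hMmatch : ∀ i : V, ∑ j ∈ G.neighborFinset i, M s(i, j) ≤ 1)
    (hp : Sym2 V → ℝ)
    (hpnonneg : ∀ e ∈ G.edgeFinset, 0 ≤ hp e)
    (hstar : ∀ i : V, ∑ j ∈ G.neighborFinset i, hp s(i, j) ≤ 1 / 2)
    (htriangle : ∀ i j k : V, G.Adj i j → G.Adj j k → G.Adj i k →
      hp s(i, j) + hp s(j, k) + hp s(i, k) ≤ 1 / 2)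
    (hLP : ∀ x : Sym2 V → ℝ,
      (∀ e ∈ G.edgeFinset, 0 ≤ x e) →
      (∀ i : V, ∑ j ∈ G.neighborFinset i, x s(i, j) ≤ 1) →
      (∀ S : Finset V, Odd S.card →
        ∑ e ∈ G.edgeFinset.filter (· ∈ S.sym2), x e ≤ ((S.card : ℝ) - 1) / 2) →
      ∑ e ∈ G.edgeFinset, w e * x e ≤ ∑ e ∈ G.edgeFinset, w e * M e) :
    (8 / 5) * ∑ e ∈ G.edgeFinset, w e * hp e ≤ ∑ e ∈ G.edgeFinset, w e * M e := by
  classical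
  -- general bound: ∑ over edges inside S of hp ≤ |S|/4
  have hA : ∀ S : Finset V,
      ∑ e ∈ G.edgeFinset.filter (· ∈ S.sym2), hp e ≤ (S.card : ℝ) / 4 := by
    intro S
    have h2 := dc G hp S
    have hle : ∑ i ∈ S, ∑ j ∈ (G.neighborFinset i).filter (· ∈ S), hp s(i, j)
        ≤ ∑ _i ∈ S, (1 / 2 : ℝ) := by
      refine Finset.sum_le_sum fun i _ => ?_
      calc ∑ j ∈ (G.neighborFinset i).filter (· ∈ S), hp s(i, j)
          ≤ ∑ j ∈ G.neighborFinset i, hp s(i, j) := by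
            refine Finset.sum_le_sum_of_subset_of_nonneg (Finset.filter_subset _ _) ?_
            intro j hj _
            exact hpnonneg _ (by simpa [SimpleGraph.mem_edgeFinset] using
              (SimpleGraph.mem_neighborFinset G i j).mp hj)
        _ ≤ 1 / 2 := hstar i
    rw [Finset.sum_const, nsmul_eq_mul] at hle
    rw [h2] at hle
    linarith
  -- bound for |S| = 3
  have hB : ∀ S : Finset V, S.card = 3 →
      ∑ e ∈ G.edgeFinset.filter (· ∈ S.sym2), hp e ≤ 1 / 2 := by
    intro S hS3
    obtain ⟨a, b, c, hab, hac, hbc, rfl⟩ := Finset.card_eq_three.mp hS3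
    by_cases h1 : G.Adj a b
    · by_cases h2 : G.Adj b c
      · by_cases h3 : G.Adj a c
        · -- triangle case
          have hsub : G.edgeFinset.filter (· ∈ ({a, b, c} : Finset V).sym2)
              ⊆ ({s(a, b), s(b, c), s(a, c)} : Finset (Sym2 V)) := by
            intro e he
            simp only [Finset.mem_filter, SimpleGraph.mem_edgeFinset] at he
            obtain ⟨hee, heS⟩ := he
            induction e with
            | _ x y =>
              rw [Finset.mk_mem_sym2_iff] at heS
              have hadj : G.Adj x y := G.mem_edgeSet.mp hee
              simp only [Finset.mem_insert, Finset.mem_singleton] at heS ⊢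
              obtain ⟨hx, hy⟩ := heS
              rcases hx with rfl | rfl | rfl <;> rcases hy with rfl | rfl | rfl
              · exact absurd rfl hadj.ne
              · exact Or.inl rfl
              · exact Or.inr (Or.inr rfl)
              · exact Or.inl Sym2.eq_swap
              · exact absurd rfl hadj.ne
              · exact Or.inr (Or.inl rfl)
              · exact Or.inr (Or.inr Sym2.eq_swap)
              · exact Or.inr (Or.inl Sym2.eq_swap)
              · exact absurd rfl hadj.ne
          have hcard : ∑ e ∈ ({s(a, b), s(b, c), s(a, c)} : Finset (Sym2 V)), hp e
              = hp s(a, b) + hp s(b, c) + hp s(a, c) := by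
            rw [Finset.sum_insert (by
                simp [Sym2.eq_iff, hab, hac, hbc, Ne.symm hab, Ne.symm hac, Ne.symm hbc]),
              Finset.sum_insert (by
                simp [Sym2.eq_iff, hab, hac, hbc, Ne.symm hab, Ne.symm hac, Ne.symm hbc]),
              Finset.sum_singleton]
            ring
          calc ∑ e ∈ G.edgeFinset.filter (· ∈ ({a, b, c} : Finset V).sym2), hp e
              ≤ ∑ e ∈ ({s(a, b), s(b, c), s(a, c)} : Finset (Sym2 V)), hp e := by
                refine Finset.sum_le_sum_of_subset_of_nonneg hsub ?_
                intro e he _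
                simp only [Finset.mem_insert, Finset.mem_singleton] at he
                rcases he with rfl | rfl | rfl
                · exact hpnonneg _ (by simpa [SimpleGraph.mem_edgeFinset] using h1)
                · exact hpnonneg _ (by simpa [SimpleGraph.mem_edgeFinset] using h2)
                · exact hpnonneg _ (by simpa [SimpleGraph.mem_edgeFinset] using h3)
            _ = hp s(a, b) + hp s(b, c) + hp s(a, c) := hcard
            _ ≤ 1 / 2 := htriangle a b c h1 h2 h3
        · -- a, c not adjacent : all edges in S touch b
          have hsub : G.edgeFinset.filter (· ∈ ({a, b, c} : Finset V).sym2)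
              ⊆ (G.neighborFinset b).image (fun j => s(b, j)) := by
            intro e he
            simp only [Finset.mem_filter, SimpleGraph.mem_edgeFinset] at he
            obtain ⟨hee, heS⟩ := he
            induction e with
            | _ x y =>
              rw [Finset.mk_mem_sym2_iff] at heS
              have hadj : G.Adj x y := G.mem_edgeSet.mp hee
              simp only [Finset.mem_insert, Finset.mem_singleton] at heS
              obtain ⟨hx, hy⟩ := heS
              simp only [Finset.mem_image, SimpleGraph.mem_neighborFinset]
              rcases hx with rfl | rfl | rfl <;> rcases hy with rfl | rfl | rfl
              · exact absurd rfl hadj.ne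
              · exact ⟨x, hadj.symm, Sym2.eq_swap⟩
              · exact absurd hadj h3
              · exact ⟨y, hadj, rfl⟩
              · exact absurd rfl hadj.ne
              · exact ⟨y, hadj, rfl⟩
              · exact absurd hadj.symm h3
              · exact ⟨x, hadj.symm, Sym2.eq_swap⟩
              · exact absurd rfl hadj.ne
          exact le_trans (star_bd G hp hpnonneg b _ hsub) (hstar b)
      · -- b, c not adjacent : all edges in S touch a
        have hsub : G.edgeFinset.filter (· ∈ ({a, b, c} : Finset V).sym2)
            ⊆ (G.neighborFinset a).image (fun j => s(a, j)) := by
          intro e he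
          simp only [Finset.mem_filter, SimpleGraph.mem_edgeFinset] at he
          obtain ⟨hee, heS⟩ := he
          induction e with
          | _ x y =>
            rw [Finset.mk_mem_sym2_iff] at heS
            have hadj : G.Adj x y := G.mem_edgeSet.mp hee
            simp only [Finset.mem_insert, Finset.mem_singleton] at heS
            obtain ⟨hx, hy⟩ := heS
            simp only [Finset.mem_image, SimpleGraph.mem_neighborFinset]
            rcases hx with rfl | rfl | rfl <;> rcases hy with rfl | rfl | rfl
            · exact absurd rfl hadj.ne
            · exact ⟨y, hadj, rfl⟩
            · exact ⟨y, hadj, rfl⟩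
            · exact ⟨x, hadj.symm, Sym2.eq_swap⟩
            · exact absurd rfl hadj.ne
            · exact absurd hadj h2
            · exact ⟨x, hadj.symm, Sym2.eq_swap⟩
            · exact absurd hadj.symm h2
            · exact absurd rfl hadj.ne
        exact le_trans (star_bd G hp hpnonneg a _ hsub) (hstar a)
    · -- a, b not adjacent : all edges in S touch c
      have hsub : G.edgeFinset.filter (· ∈ ({a, b, c} : Finset V).sym2)
          ⊆ (G.neighborFinset c).image (fun j => s(c, j)) := by
        intro e he
        simp only [Finset.mem_filter, SimpleGraph.mem_edgeFinset] at he
        obtain ⟨hee, heS⟩ := he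
        induction e with
        | _ x y =>
          rw [Finset.mk_mem_sym2_iff] at heS
          have hadj : G.Adj x y := G.mem_edgeSet.mp hee
          simp only [Finset.mem_insert, Finset.mem_singleton] at heS
          obtain ⟨hx, hy⟩ := heS
          simp only [Finset.mem_image, SimpleGraph.mem_neighborFinset]
          rcases hx with rfl | rfl | rfl <;> rcases hy with rfl | rfl | rfl
          · exact absurd rfl hadj.ne
          · exact absurd hadj h1
          · exact ⟨x, hadj.symm, Sym2.eq_swap⟩
          · exact absurd hadj.symm h1
          · exact absurd rfl hadj.ne
          · exact ⟨x, hadj.symm, Sym2.eq_swap⟩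
          · exact ⟨y, hadj, rfl⟩
          · exact ⟨y, hadj, rfl⟩
          · exact absurd rfl hadj.ne
      exact le_trans (star_bd G hp hpnonneg c _ hsub) (hstar c)
  -- the scaled point (8/5) hp is LP-feasible
  have key := hLP (fun e => (8 / 5) * hp e)
    (fun e he => mul_nonneg (by norm_num) (hpnonneg e he))
    (fun i => by
      rw [← Finset.mul_sum]
      have := hstar i
      linarith)
    (fun S hodd => by
      rw [← Finset.mul_sum]
      rcases Nat.lt_or_ge S.card 5 with h5 | h5
      · obtain ⟨k, hk⟩ := hodd
        interval_cases h : S.card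
        · omega
        · -- card = 1 : no edges inside S
          have hempty : G.edgeFinset.filter (· ∈ S.sym2) = ∅ := by
            ext e
            simp only [Finset.mem_filter, SimpleGraph.mem_edgeFinset,
              Finset.notMem_empty, iff_false, not_and]
            intro hee heS
            induction e with
            | _ x y =>
              rw [Finset.mk_mem_sym2_iff] at heS
              obtain ⟨a, ha⟩ := Finset.card_eq_one.mp h
              obtain ⟨hxS, hyS⟩ := heS
              rw [ha, Finset.mem_singleton] at hxS hyS
              subst hxS; subst hyS
              exact (G.mem_edgeSet.mp hee).ne rfl
          rw [hempty]
          simp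
        · omega
        · -- card = 3
          have := hB S h
          push_cast
          linarith
        · omega
      · have := hA S
        have h5' : (5 : ℝ) ≤ (S.card : ℝ) := by exact_mod_cast h5
        nlinarith)
  calc (8 / 5) * ∑ e ∈ G.edgeFinset, w e * hp e
      = ∑ e ∈ G.edgeFinset, w e * ((8 / 5) * hp e) := by
        rw [Finset.mul_sum]; exact Finset.sum_congr rfl fun e _ => by ring
    _ ≤ ∑ e ∈ G.edgeFinset, w e * M e := key
end

section
/- Let (x_e)_{e∈E} be a point of the fractional matching polytope of a graph G (i.e., x_e ≥ 0 and degree sums ≤ 1), and suppose additionally every odd-set constraint for |S| = 3 holds. If M* is the maximum weight of a matching in G (given by Edmonds' LP), then ∑_e w_e x_e ≤ (5/4)·M* for any nonnegative weights w. -/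
open Finset

lemma sum_pairs_eq_twice {V : Type*} [Fintype V] [DecidableEq V] (G : SimpleGraph V)
    [DecidableRel G.Adj] (f : Sym2 V → ℝ) (S : Finset V) :
    ∑ i ∈ S, ∑ j ∈ G.neighborFinset i ∩ S, f s(i, j)
      = 2 * ∑ e ∈ G.edgeFinset.filter (· ∈ S.sym2), f e := by
  classical
  have h1 : ∑ i ∈ S, ∑ j ∈ G.neighborFinset i ∩ S, f s(i, j)
      = ∑ p ∈ S.sigma (fun i => G.neighborFinset i ∩ S), f s(p.1, p.2) := by
    rw [Finset.sum_sigma]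
  rw [h1]
  have h2 : ∑ p ∈ S.sigma (fun i => G.neighborFinset i ∩ S), f s(p.1, p.2)
      = ∑ d ∈ (univ.filter (fun d : G.Dart => d.fst ∈ S ∧ d.snd ∈ S)), f d.edge := by
    refine Finset.sum_bij' (fun p hp => SimpleGraph.Dart.mk (p.1, p.2) ?_)
      (fun d hd => (⟨d.fst, d.snd⟩ : (_ : V) × V)) ?_ ?_ ?_ ?_ ?_
    · simp only [Finset.mem_sigma, mem_inter, SimpleGraph.mem_neighborFinset] at hp
      exact hp.2.1
    · intro p hp
      simp only [Finset.mem_sigma, mem_inter, SimpleGraph.mem_neighborFinset] at hp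
      simp [hp.1, hp.2.2]
    · intro d hd
      simp only [mem_filter, mem_univ, true_and] at hd
      simp only [Finset.mem_sigma, mem_inter, SimpleGraph.mem_neighborFinset]
      exact ⟨hd.1, d.adj, hd.2⟩
    · intro p hp; rfl
    · intro d hd; rfl
    · intro p hp; rfl
  rw [h2]
  rw [← Finset.sum_fiberwise_of_maps_to (g := SimpleGraph.Dart.edge)
      (t := G.edgeFinset.filter (· ∈ S.sym2)) ?_ (fun d => f d.edge)]
  · rw [Finset.mul_sum]
    apply Finset.sum_congr rfl
    intro e he
    simp only [mem_filter, SimpleGraph.mem_edgeFinset] at he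
    have hfib : (univ.filter (fun d : G.Dart => d.fst ∈ S ∧ d.snd ∈ S)).filter
        (fun d => d.edge = e) = ({d : G.Dart | d.edge = e} : Finset _) := by
      ext d
      simp only [mem_filter, mem_univ, true_and, Finset.mem_filter]
      constructor
      · rintro ⟨_, h⟩; exact h
      · intro h
        refine ⟨?_, h⟩
        have : d.edge ∈ S.sym2 := h ▸ he.2
        rw [SimpleGraph.Dart.edge, Finset.mk_mem_sym2_iff] at this
        exact this
    rw [hfib]
    have hcard : #({d : G.Dart | d.edge = e} : Finset _) = 2 :=
      G.dart_edge_fiber_card e he.1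
    have : ∀ d ∈ ({d : G.Dart | d.edge = e} : Finset _), f d.edge = f e := by
      intro d hd
      simp only [Finset.mem_filter] at hd
      rw [hd.2]
    rw [Finset.sum_congr rfl this, Finset.sum_const, hcard]
    rw [nsmul_eq_mul]
    norm_num
  · intro d hd
    simp only [mem_filter, mem_univ, true_and] at hd
    simp only [mem_filter, SimpleGraph.mem_edgeFinset]
    refine ⟨d.edge_mem, ?_⟩
    rw [SimpleGraph.Dart.edge, Finset.mk_mem_sym2_iff]
    exact hd

/-- If `x` lies in the fractional matching polytope and additionally satisfies
the odd-set constraints for `|S| = 3`, and `Mstar` is the maximum weight of a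
matching (given by Edmonds' LP, assumed as hypothesis `hEdmonds`), then
`∑ w_e x_e ≤ (5/4)·Mstar`. -/
theorem stmt_14 {V : Type*} [Fintype V] [DecidableEq V]
    (G : SimpleGraph V) [DecidableRel G.Adj]
    (w : Sym2 V → ℝ) (hw : ∀ e ∈ G.edgeFinset, 0 ≤ w e)
    (x : Sym2 V → ℝ)
    (hnonneg : ∀ e ∈ G.edgeFinset, 0 ≤ x e)
    (hdeg : ∀ i : V, ∑ j ∈ G.neighborFinset i, x s(i, j) ≤ 1)
    (htri : ∀ S : Finset V, S.card = 3 →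
      ∑ e ∈ G.edgeFinset.filter (· ∈ S.sym2), x e ≤ 1)
    (Mstar : ℝ)
    (hEdmonds : ∀ y : Sym2 V → ℝ,
      (∀ e ∈ G.edgeFinset, 0 ≤ y e) →
      (∀ i : V, ∑ j ∈ G.neighborFinset i, y s(i, j) ≤ 1) →
      (∀ S : Finset V, Odd S.card →
        ∑ e ∈ G.edgeFinset.filter (· ∈ S.sym2), y e ≤ ((S.card : ℝ) - 1) / 2) →
      ∑ e ∈ G.edgeFinset, w e * y e ≤ Mstar) :
    ∑ e ∈ G.edgeFinset, w e * x e ≤ (5 / 4) * Mstar := by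
  have key := hEdmonds (fun e => (4/5 : ℝ) * x e)
    (fun e he => mul_nonneg (by norm_num) (hnonneg e he)) ?hd ?hodd
  case hd =>
    intro i
    have h1 := hdeg i
    calc ∑ j ∈ G.neighborFinset i, (4/5 : ℝ) * x s(i, j)
        = (4/5 : ℝ) * ∑ j ∈ G.neighborFinset i, x s(i, j) := by rw [Finset.mul_sum]
      _ ≤ (4/5 : ℝ) * 1 := by
          apply mul_le_mul_of_nonneg_left h1 (by norm_num)
      _ ≤ 1 := by norm_num
  case hodd =>
    intro S hS
    set F := G.edgeFinset.filter (· ∈ S.sym2) with hF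
    have hsum : ∑ e ∈ F, (4/5 : ℝ) * x e = (4/5 : ℝ) * ∑ e ∈ F, x e := by
      rw [Finset.mul_sum]
    rw [hsum]
    have hXnn : ∀ e ∈ F, 0 ≤ x e := fun e he =>
      hnonneg e (Finset.mem_filter.mp he).1
    have hX0 : (0:ℝ) ≤ ∑ e ∈ F, x e := Finset.sum_nonneg hXnn
    -- general degree bound
    have hXhalf : ∑ e ∈ F, x e ≤ (S.card : ℝ) / 2 := by
      have hdc := sum_pairs_eq_twice G x S
      have hle : ∑ i ∈ S, ∑ j ∈ G.neighborFinset i ∩ S, x s(i, j)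
          ≤ ∑ i ∈ S, ∑ j ∈ G.neighborFinset i, x s(i, j) := by
        apply Finset.sum_le_sum
        intro i hi
        apply Finset.sum_le_sum_of_subset_of_nonneg (Finset.inter_subset_left)
        intro j hj _
        apply hnonneg
        rw [SimpleGraph.mem_edgeFinset]
        exact (SimpleGraph.mem_neighborFinset G i j).mp hj
      have hle2 : ∑ i ∈ S, ∑ j ∈ G.neighborFinset i, x s(i, j) ≤ (S.card : ℝ) := by
        calc ∑ i ∈ S, ∑ j ∈ G.neighborFinset i, x s(i, j)
            ≤ ∑ i ∈ S, (1:ℝ) := Finset.sum_le_sum (fun i _ => hdeg i)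
          _ = (S.card : ℝ) := by simp
      linarith [hdc ▸ (hle.trans hle2)]
    obtain ⟨k, hk⟩ := hS
    match k, hk with
    | 0, hk =>
      -- |S| = 1 : F is empty
      have hF0 : F = ∅ := by
        rw [Finset.eq_empty_iff_forall_notMem]
        intro e he
        rw [hF, Finset.mem_filter] at he
        obtain ⟨he1, he2⟩ := he
        induction e with
        | h u v =>
          rw [Finset.mk_mem_sym2_iff] at he2
          have hcard : S.card = 1 := by omega
          obtain ⟨a, ha⟩ := Finset.card_eq_one.mp hcard
          simp only [ha, Finset.mem_singleton] at he2
          have : G.Adj u v := by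
            rw [← SimpleGraph.mem_edgeSet, ← SimpleGraph.mem_edgeFinset] at *
            exact he1
          rw [he2.1, he2.2] at this
          exact G.irrefl this
      rw [hF0]
      simp [hk]
    | 1, hk =>
      have h3 : S.card = 3 := by omega
      have := htri S h3
      rw [h3]
      norm_num
      linarith
    | (m+2), hk =>
      have hcard : (S.card : ℝ) = 2*(m:ℝ) + 5 := by
        rw [hk]; push_cast; ring
      rw [hcard] at hXhalf ⊢
      have hm : (0:ℝ) ≤ (m:ℝ) := Nat.cast_nonneg m
      nlinarith
  -- conclude
  have : ∑ e ∈ G.edgeFinset, w e * ((4/5 : ℝ) * x e)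
      = (4/5 : ℝ) * ∑ e ∈ G.edgeFinset, w e * x e := by
    rw [Finset.mul_sum]; apply Finset.sum_congr rfl; intro e he; ring
  rw [this] at key
  linarith
end
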